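/- arXiv:2306.09048 — 6 statements merged into one kernel-verified Lean document; each statement's English description precedes it below -/
import Mathlib

section
/- For a two-armed unit-variance Gaussian bandit with gap Δ = μ1 − μ2 > 0 and threshold c = log(1/(2.4δ)) > 0, if nonnegative reals N1, N2 satisfy inf_x { N1·(μ1−x)²/2 + N2·(μ2−x)²/2 } ≥ c, then N1 + N2 ≥ 8c/Δ², with equality achieved at N1 = N2 = 4c/Δ². In particular the optimal value of the lower-bound problem P1 with no offline data equals (8/Δ²)·log(1/(2.4δ)). -/
/-- Two-armed Gaussian lower-bound problem P1 with no offline data: any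
nonnegative `(N1,N2)` satisfying the index constraint has `N1+N2 ≥ 8c/Δ²`,
and equality is achieved at `N1 = N2 = 4c/Δ²`, where `c = log(1/(2.4δ))`. -/
theorem stmt_2 (m1 m2 δ : ℝ) (hm : m2 < m1) (hδ0 : 0 < δ) (hδ1 : δ < 1 / 2.4) :
    (∀ N1 N2 : ℝ, 0 ≤ N1 → 0 ≤ N2 →
      Real.log (1 / (2.4 * δ)) ≤ (⨅ x : ℝ, N1 * (m1 - x) ^ 2 / 2 + N2 * (m2 - x) ^ 2 / 2) →
      8 * Real.log (1 / (2.4 * δ)) / (m1 - m2) ^ 2 ≤ N1 + N2) ∧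
    Real.log (1 / (2.4 * δ)) ≤
      (⨅ x : ℝ, (4 * Real.log (1 / (2.4 * δ)) / (m1 - m2) ^ 2) * (m1 - x) ^ 2 / 2
        + (4 * Real.log (1 / (2.4 * δ)) / (m1 - m2) ^ 2) * (m2 - x) ^ 2 / 2) ∧
    4 * Real.log (1 / (2.4 * δ)) / (m1 - m2) ^ 2
        + 4 * Real.log (1 / (2.4 * δ)) / (m1 - m2) ^ 2
      = 8 * Real.log (1 / (2.4 * δ)) / (m1 - m2) ^ 2 := by
  set c := Real.log (1 / (2.4 * δ)) with hc
  have hΔ : (0:ℝ) < (m1 - m2) ^ 2 := by nlinarith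
  have hcpos : 0 < c := by
    apply Real.log_pos
    rw [lt_div_iff₀ (by linarith : (0:ℝ) < 2.4 * δ)]
    nlinarith
  refine ⟨?_, ?_, by ring⟩
  · intro N1 N2 h1 h2 hinf
    have hbdd : BddBelow (Set.range fun x : ℝ =>
        N1 * (m1 - x) ^ 2 / 2 + N2 * (m2 - x) ^ 2 / 2) := by
      refine ⟨0, ?_⟩
      rintro _ ⟨x, rfl⟩
      positivity
    have hle := ciInf_le hbdd ((m1 + m2) / 2)
    have : c ≤ N1 * (m1 - (m1 + m2) / 2) ^ 2 / 2 + N2 * (m2 - (m1 + m2) / 2) ^ 2 / 2 :=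
      le_trans hinf hle
    rw [div_le_iff₀ hΔ]
    nlinarith
  · apply le_ciInf
    intro x
    have ha : 0 ≤ 4 * c / (m1 - m2) ^ 2 := by positivity
    have hkey : (m1 - m2) ^ 2 / 2 ≤ (m1 - x) ^ 2 + (m2 - x) ^ 2 := by nlinarith [sq_nonneg (m1 + m2 - 2 * x)]
    have := mul_le_mul_of_nonneg_left hkey ha
    have heq : 4 * c / (m1 - m2) ^ 2 * ((m1 - m2) ^ 2 / 2) = 2 * c := by
      rw [div_mul_div_comm, div_eq_iff (mul_pos hΔ two_pos).ne']; ring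
    nlinarith
end

section
/- For the Gaussian index F(N1, N2) = (N1·N2/(N1+N2))·Δ²/2 with Δ = μ1 − μ2 > 0, the partial derivative of F with respect to N1 equals KL(μ1, x_{1,2}) = (μ1 − x_{1,2})²/2 and the partial derivative with respect to N2 equals KL(μ2, x_{1,2}) = (μ2 − x_{1,2})²/2, where x_{1,2} = (N1μ1 + N2μ2)/(N1+N2) is the infimizing point. -/
/-- Partial derivatives of the Gaussian index `F(N1,N2) = (N1N2/(N1+N2))·Δ²/2`:
`∂F/∂N1 = (μ1 − x_{1,2})²/2` and `∂F/∂N2 = (μ2 − x_{1,2})²/2`, where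
`x_{1,2} = (N1μ1 + N2μ2)/(N1+N2)`. -/
theorem stmt_4 (m1 m2 N1 N2 : ℝ) (hm : m2 < m1) (h1 : 0 < N1) (h2 : 0 < N2) :
    HasDerivAt (fun n : ℝ => n * N2 / (n + N2) * (m1 - m2) ^ 2 / 2)
      ((m1 - (N1 * m1 + N2 * m2) / (N1 + N2)) ^ 2 / 2) N1 ∧
    HasDerivAt (fun n : ℝ => N1 * n / (N1 + n) * (m1 - m2) ^ 2 / 2)
      ((m2 - (N1 * m1 + N2 * m2) / (N1 + N2)) ^ 2 / 2) N2 := by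
  have hs : N1 + N2 ≠ 0 := by positivity
  constructor
  · have h := ((((hasDerivAt_id N1).mul_const N2).div
      ((hasDerivAt_id N1).add_const N2) hs).mul_const ((m1 - m2) ^ 2)).div_const 2
    refine h.congr_deriv ?_
    simp only [id]
    field_simp
    ring
  · have h := ((((hasDerivAt_id N2).const_mul N1).div
      ((hasDerivAt_id N2).const_add N1) hs).mul_const ((m1 - m2) ^ 2)).div_const 2
    refine h.congr_deriv ?_
    simp only [id]
    field_simp
    ring
end

section
/- Let μ ∈ ℝ^K have unique best arm 1 and let p ∈ Σ_K be fixed. Define V(μ,z) = max_{w ∈ Σ_K} min_{j≠1} inf_x [ (z p_1 + (1−z) w_1)·KL(μ1,x) + (z p_j + (1−z) w_j)·KL(μ_j,x) ] with Gaussian unit-variance KL(p,q)=(p−q)²/2. Then z ↦ V(μ,z) is non-increasing on [0,1]. -/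
/-- Monotonicity of the max-min value: with unique best arm `1` (index 0) and
fixed offline proportions `p` in the simplex, `z ↦ V(μ,z)` is non-increasing
on `[0,1]`, where `V(μ,z)` is the sup over online proportions `w` in the
simplex of the min over `j ≠ 1` of `inf_x g_j(w,z,x)` (Gaussian KL). -/
theorem stmt_11 (K : ℕ) [NeZero K] (hK : 2 ≤ K) (μ p : Fin K → ℝ)
    (hp : (∀ i, 0 ≤ p i) ∧ ∑ i, p i = 1)
    (hbest : ∀ j : Fin K, j ≠ 0 → μ j < μ 0) :
    AntitoneOn (fun z : ℝ =>
      sSup ((fun w : Fin K → ℝ =>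
        ⨅ j : {j : Fin K // j ≠ 0}, ⨅ x : ℝ,
          (z * p 0 + (1 - z) * w 0) * (μ 0 - x) ^ 2 / 2
            + (z * p j.1 + (1 - z) * w j.1) * (μ j.1 - x) ^ 2 / 2) ''
        {w : Fin K → ℝ | (∀ i, 0 ≤ w i) ∧ ∑ i, w i = 1}))
      (Set.Icc 0 1) := by
  obtain ⟨hp0, hp1⟩ := hp
  have hj1 : (1 : ℕ) < K := by omega
  have hj0ne : (⟨1, hj1⟩ : Fin K) ≠ 0 := by simp [Fin.ext_iff]
  haveI : Nonempty {j : Fin K // j ≠ 0} := ⟨⟨⟨1, hj1⟩, hj0ne⟩⟩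
  set j0 : {j : Fin K // j ≠ 0} := ⟨⟨1, hj1⟩, hj0ne⟩ with hj0def
  set C : ℝ := (μ j0.1 - μ 0) ^ 2 / 2 with hC
  -- value function
  set F : ℝ → (Fin K → ℝ) → ℝ := fun z w =>
    ⨅ j : {j : Fin K // j ≠ 0}, ⨅ x : ℝ,
      (z * p 0 + (1 - z) * w 0) * (μ 0 - x) ^ 2 / 2
        + (z * p j.1 + (1 - z) * w j.1) * (μ j.1 - x) ^ 2 / 2 with hF
  have key : ∀ z : ℝ, z ∈ Set.Icc (0:ℝ) 1 →
      ∀ w : Fin K → ℝ, (∀ i, 0 ≤ w i) → ∑ i, w i = 1 → F z w ≤ C := by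
    intro z hz w hw0 hw1
    have ha0 : ∀ i, 0 ≤ z * p i + (1 - z) * w i := by
      intro i
      have := hz.1; have := hz.2
      have : 0 ≤ z * p i := mul_nonneg hz.1 (hp0 i)
      have : 0 ≤ (1 - z) * w i := mul_nonneg (by linarith [hz.2]) (hw0 i)
      linarith
    have hble : ∀ j : {j : Fin K // j ≠ 0}, BddBelow (Set.range fun x : ℝ =>
        (z * p 0 + (1 - z) * w 0) * (μ 0 - x) ^ 2 / 2
          + (z * p j.1 + (1 - z) * w j.1) * (μ j.1 - x) ^ 2 / 2) := by
      intro j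
      refine ⟨0, ?_⟩
      rintro y ⟨x, rfl⟩
      have h1 : 0 ≤ (z * p 0 + (1 - z) * w 0) * (μ 0 - x) ^ 2 / 2 :=
        div_nonneg (mul_nonneg (ha0 0) (sq_nonneg _)) (by norm_num)
      have h2 : 0 ≤ (z * p j.1 + (1 - z) * w j.1) * (μ j.1 - x) ^ 2 / 2 :=
        div_nonneg (mul_nonneg (ha0 j.1) (sq_nonneg _)) (by norm_num)
      linarith
    have hbout : BddBelow (Set.range fun j : {j : Fin K // j ≠ 0} => ⨅ x : ℝ,
        (z * p 0 + (1 - z) * w 0) * (μ 0 - x) ^ 2 / 2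
          + (z * p j.1 + (1 - z) * w j.1) * (μ j.1 - x) ^ 2 / 2) := by
      refine ⟨0, ?_⟩
      rintro y ⟨j, rfl⟩
      refine le_ciInf fun x => ?_
      have h1 : 0 ≤ (z * p 0 + (1 - z) * w 0) * (μ 0 - x) ^ 2 / 2 :=
        div_nonneg (mul_nonneg (ha0 0) (sq_nonneg _)) (by norm_num)
      have h2 : 0 ≤ (z * p j.1 + (1 - z) * w j.1) * (μ j.1 - x) ^ 2 / 2 :=
        div_nonneg (mul_nonneg (ha0 j.1) (sq_nonneg _)) (by norm_num)
      linarith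
    refine le_trans (ciInf_le_of_le hbout j0 ?_) le_rfl
    refine le_trans (ciInf_le_of_le (hble j0) (μ 0) ?_) le_rfl
    have haj : z * p j0.1 + (1 - z) * w j0.1 ≤ 1 := by
      have h1 : p j0.1 ≤ 1 := by
        rw [← hp1]
        exact Finset.single_le_sum (fun i _ => hp0 i) (Finset.mem_univ _)
      have h2 : w j0.1 ≤ 1 := by
        rw [← hw1]
        exact Finset.single_le_sum (fun i _ => hw0 i) (Finset.mem_univ _)
      nlinarith [hz.1, hz.2, hp0 j0.1, hw0 j0.1]
    have hsq : (0:ℝ) ≤ (μ j0.1 - μ 0) ^ 2 / 2 := by positivity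
    have : (z * p j0.1 + (1 - z) * w j0.1) * (μ j0.1 - μ 0) ^ 2 / 2 ≤ C := by
      rw [hC]
      nlinarith [ha0 j0.1]
    simp only [sub_self, ne_eq, OfNat.ofNat_ne_zero, not_false_eq_true, zero_pow, mul_zero,
      zero_div, zero_add]
    exact this
  -- main argument
  rintro z1 hz1 z2 hz2 h12
  simp only
  by_cases hz1eq : z1 = 1
  · have hz2eq : z2 = 1 := le_antisymm hz2.2 (hz1eq ▸ h12)
    rw [hz1eq, hz2eq]
  · have hz1lt : z1 < 1 := lt_of_le_of_ne hz1.2 hz1eq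
    have hden : (0:ℝ) < 1 - z1 := by linarith
    -- subset
    have hsub : (fun w : Fin K → ℝ =>
        ⨅ j : {j : Fin K // j ≠ 0}, ⨅ x : ℝ,
          (z2 * p 0 + (1 - z2) * w 0) * (μ 0 - x) ^ 2 / 2
            + (z2 * p j.1 + (1 - z2) * w j.1) * (μ j.1 - x) ^ 2 / 2) ''
        {w : Fin K → ℝ | (∀ i, 0 ≤ w i) ∧ ∑ i, w i = 1} ⊆
        (fun w : Fin K → ℝ =>
        ⨅ j : {j : Fin K // j ≠ 0}, ⨅ x : ℝ,
          (z1 * p 0 + (1 - z1) * w 0) * (μ 0 - x) ^ 2 / 2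
            + (z1 * p j.1 + (1 - z1) * w j.1) * (μ j.1 - x) ^ 2 / 2) ''
        {w : Fin K → ℝ | (∀ i, 0 ≤ w i) ∧ ∑ i, w i = 1} := by
      rintro y ⟨w, ⟨hw0, hw1⟩, rfl⟩
      refine ⟨fun i => ((z2 - z1) * p i + (1 - z2) * w i) / (1 - z1), ⟨?_, ?_⟩, ?_⟩
      · intro i
        apply div_nonneg _ hden.le
        have h1 : 0 ≤ (z2 - z1) * p i := mul_nonneg (by linarith) (hp0 i)
        have h2 : 0 ≤ (1 - z2) * w i := mul_nonneg (by linarith [hz2.2]) (hw0 i)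
        linarith
      · rw [← Finset.sum_div]
        rw [Finset.sum_add_distrib, ← Finset.mul_sum, ← Finset.mul_sum, hp1, hw1]
        field_simp
        ring
      · have hco : ∀ i, z1 * p i + (1 - z1) * (((z2 - z1) * p i + (1 - z2) * w i) / (1 - z1))
            = z2 * p i + (1 - z2) * w i := by
          intro i
          rw [mul_div_cancel₀ _ hden.ne']
          ring
        simp only [hco]
    -- nonempty and bddAbove
    have hne : ((fun w : Fin K → ℝ =>
        ⨅ j : {j : Fin K // j ≠ 0}, ⨅ x : ℝ,
          (z2 * p 0 + (1 - z2) * w 0) * (μ 0 - x) ^ 2 / 2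
            + (z2 * p j.1 + (1 - z2) * w j.1) * (μ j.1 - x) ^ 2 / 2) ''
        {w : Fin K → ℝ | (∀ i, 0 ≤ w i) ∧ ∑ i, w i = 1}).Nonempty :=
      ⟨_, ⟨p, ⟨hp0, hp1⟩, rfl⟩⟩
    have hbdd : BddAbove ((fun w : Fin K → ℝ =>
        ⨅ j : {j : Fin K // j ≠ 0}, ⨅ x : ℝ,
          (z1 * p 0 + (1 - z1) * w 0) * (μ 0 - x) ^ 2 / 2
            + (z1 * p j.1 + (1 - z1) * w j.1) * (μ j.1 - x) ^ 2 / 2) ''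
        {w : Fin K → ℝ | (∀ i, 0 ≤ w i) ∧ ∑ i, w i = 1}) := by
      refine ⟨C, ?_⟩
      rintro y ⟨w, ⟨hw0, hw1⟩, rfl⟩
      exact key z1 hz1 w hw0 hw1
    exact csSup_le_csSup hbdd hne hsub
end

section
/- Consider a two-armed unit-variance Gaussian bandit with μ1 = μ2 + Δ, Δ > 0, offline data N°_1 = ∞ (modeled as: the constraint involving arm 1's count is automatically satisfied, i.e., the constraint becomes N_2·KL(μ2, μ1) ≥ c) and N°_2 = 0, threshold c > 0. Then the minimum total number of online samples is N_2 = c/KL(μ2,μ1) = 2c/Δ², whereas the purely-online optimum (ignoring offline data) requires N_1 + N_2 = 8c/Δ² online samples. Hence the artificial-replay strategy using the online-optimal proportions requires a factor 4 more online samples than the offline-aware optimum in this instance (and at least factor 2 more than any scheme that replays the infinite arm-1 data). -/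
/-- Artificial replay sub-optimality instance: with infinite offline samples
of arm 1 the constraint reduces to `N2·Δ²/2 ≥ c`, whose minimum is `2c/Δ²`,
whereas the purely-online optimum `min N1+N2` s.t.
`(N1N2/(N1+N2))Δ²/2 ≥ c` equals `8c/Δ²`, a factor of 4 more. -/
theorem stmt_13 (Δ c : ℝ) (hΔ : 0 < Δ) (hc : 0 < c) :
    sInf {s : ℝ | ∃ N2 : ℝ, 0 ≤ N2 ∧ c ≤ N2 * Δ ^ 2 / 2 ∧ s = N2} = 2 * c / Δ ^ 2 ∧
    sInf {s : ℝ | ∃ N1 N2 : ℝ, 0 ≤ N1 ∧ 0 ≤ N2 ∧ 0 < N1 + N2 ∧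
        c ≤ N1 * N2 / (N1 + N2) * Δ ^ 2 / 2 ∧ s = N1 + N2} = 8 * c / Δ ^ 2 ∧
    8 * c / Δ ^ 2 = 4 * (2 * c / Δ ^ 2) := by
  have hΔ2 : (0:ℝ) < Δ ^ 2 := by positivity
  refine ⟨?_, ?_, by ring⟩
  · have hmem : (2 * c / Δ ^ 2) ∈ {s : ℝ | ∃ N2 : ℝ, 0 ≤ N2 ∧ c ≤ N2 * Δ ^ 2 / 2 ∧ s = N2} := by
      refine ⟨2 * c / Δ ^ 2, by positivity, le_of_eq ?_, rfl⟩
      field_simp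
    have hbdd : BddBelow {s : ℝ | ∃ N2 : ℝ, 0 ≤ N2 ∧ c ≤ N2 * Δ ^ 2 / 2 ∧ s = N2} := by
      refine ⟨0, ?_⟩
      rintro s ⟨N2, hN2, _, rfl⟩; exact hN2
    apply le_antisymm (csInf_le hbdd hmem)
    apply le_csInf ⟨_, hmem⟩
    rintro s ⟨N2, hN2, hcle, rfl⟩
    rw [div_le_iff₀ hΔ2]
    nlinarith
  · have hconstr : (4 * c / Δ ^ 2) * (4 * c / Δ ^ 2) / (4 * c / Δ ^ 2 + 4 * c / Δ ^ 2) * Δ ^ 2 / 2 = c := by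
      field_simp; ring
    have hmem : (8 * c / Δ ^ 2) ∈ {s : ℝ | ∃ N1 N2 : ℝ, 0 ≤ N1 ∧ 0 ≤ N2 ∧ 0 < N1 + N2 ∧
        c ≤ N1 * N2 / (N1 + N2) * Δ ^ 2 / 2 ∧ s = N1 + N2} := by
      exact ⟨4 * c / Δ ^ 2, 4 * c / Δ ^ 2, by positivity, by positivity, by positivity,
        le_of_eq hconstr.symm, by ring⟩
    have hbdd : BddBelow {s : ℝ | ∃ N1 N2 : ℝ, 0 ≤ N1 ∧ 0 ≤ N2 ∧ 0 < N1 + N2 ∧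
        c ≤ N1 * N2 / (N1 + N2) * Δ ^ 2 / 2 ∧ s = N1 + N2} := by
      refine ⟨0, ?_⟩
      rintro s ⟨N1, N2, h1, h2, _, _, rfl⟩; positivity
    apply le_antisymm (csInf_le hbdd hmem)
    apply le_csInf ⟨_, hmem⟩
    rintro s ⟨N1, N2, h1, h2, hs, hcle, rfl⟩
    rw [div_le_iff₀ hΔ2]
    have hkey : N1 * N2 / (N1 + N2) ≤ (N1 + N2) / 4 := by
      rw [div_le_div_iff₀ hs (by norm_num)]
      nlinarith [sq_nonneg (N1 - N2)]
    nlinarith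
end

section
/- Let Δ > 0, c > 0, and define for z ∈ [0, z_max) the function G(z)/z where, for the two-arm Gaussian case with offline proportions p = (p_1, p_2) and fixed online proportions w = (w_1, w_2) (all entries positive), G(z) = inf_x [(z p_1 + (1−z) w_1)·(μ1−x)²/2 + (z p_2 + (1−z) w_2)·(μ2−x)²/2]. Then the derivative of G(z)/z with respect to 1/z equals w_1·(μ1 − x_{1,2}(z))²/2 + w_2·(μ2 − x_{1,2}(z))²/2 ≥ 0, where x_{1,2}(z) is the infimizer; in particular z ↦ G(z)/z is non-increasing in z on (0,1]. -/
/-- Two-arm Gaussian mixture index `G(z) = inf_x [(zp1+(1−z)w1)(μ1−x)²/2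
+ (zp2+(1−z)w2)(μ2−x)²/2]`. -/
noncomputable def mixG (m1 m2 p1 p2 w1 w2 z : ℝ) : ℝ :=
  ⨅ x : ℝ, (z * p1 + (1 - z) * w1) * (m1 - x) ^ 2 / 2
    + (z * p2 + (1 - z) * w2) * (m2 - x) ^ 2 / 2

/-- The infimizing point `x_{1,2}(z)`. -/
noncomputable def mixX (m1 m2 p1 p2 w1 w2 z : ℝ) : ℝ :=
  ((z * p1 + (1 - z) * w1) * m1 + (z * p2 + (1 - z) * w2) * m2)
    / ((z * p1 + (1 - z) * w1) + (z * p2 + (1 - z) * w2))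

lemma mixG_eq (m1 m2 p1 p2 w1 w2 z : ℝ) (hps : p1 + p2 = 1) (hws : w1 + w2 = 1) :
    mixG m1 m2 p1 p2 w1 w2 z
      = (z * p1 + (1 - z) * w1) * (z * p2 + (1 - z) * w2) * (m1 - m2) ^ 2 / 2 := by
  set a := z * p1 + (1 - z) * w1 with ha
  set b := z * p2 + (1 - z) * w2 with hb
  have hab : b = 1 - a := by
    rw [ha, hb]; linear_combination z * hps + (1 - z) * hws
  set c := a * m1 + b * m2 with hc
  have key : ∀ x : ℝ, a * (m1 - x) ^ 2 / 2 + b * (m2 - x) ^ 2 / 2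
      = (x - c) ^ 2 / 2 + a * b * (m1 - m2) ^ 2 / 2 := by
    intro x; rw [hc, hab]; ring
  unfold mixG
  apply le_antisymm
  · calc (⨅ x : ℝ, a * (m1 - x) ^ 2 / 2 + b * (m2 - x) ^ 2 / 2)
        ≤ a * (m1 - c) ^ 2 / 2 + b * (m2 - c) ^ 2 / 2 := by
          apply ciInf_le ⟨a * b * (m1 - m2) ^ 2 / 2, ?_⟩ c
          rintro y ⟨x, rfl⟩
          show a * b * (m1 - m2) ^ 2 / 2 ≤ a * (m1 - x) ^ 2 / 2 + b * (m2 - x) ^ 2 / 2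
          rw [key x]; nlinarith [sq_nonneg (x - c)]
      _ = a * b * (m1 - m2) ^ 2 / 2 := by rw [key c]; ring
  · apply le_ciInf
    intro x
    show a * b * (m1 - m2) ^ 2 / 2 ≤ a * (m1 - x) ^ 2 / 2 + b * (m2 - x) ^ 2 / 2
    rw [key x]; nlinarith [sq_nonneg (x - c)]

lemma mixX_eq (m1 m2 p1 p2 w1 w2 z : ℝ) (hps : p1 + p2 = 1) (hws : w1 + w2 = 1) :
    mixX m1 m2 p1 p2 w1 w2 z
      = (z * p1 + (1 - z) * w1) * m1 + (z * p2 + (1 - z) * w2) * m2 := by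
  have hab : (z * p1 + (1 - z) * w1) + (z * p2 + (1 - z) * w2) = 1 := by
    linear_combination z * hps + (1 - z) * hws
  rw [mixX, hab, div_one]

/-- The derivative of `G(z)/z` with respect to `1/z` equals
`w1·(μ1−x_{1,2}(z))²/2 + w2·(μ2−x_{1,2}(z))²/2 ≥ 0`; in particular
`z ↦ G(z)/z` is non-increasing on `(0,1]`. -/
theorem stmt_15 (m1 m2 p1 p2 w1 w2 : ℝ) (hm : m2 < m1)
    (hp1 : 0 < p1) (hp2 : 0 < p2) (hw1 : 0 < w1) (hw2 : 0 < w2)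
    (hps : p1 + p2 = 1) (hws : w1 + w2 = 1) :
    (∀ z ∈ Set.Ioc (0 : ℝ) 1,
      HasDerivAt (fun u : ℝ => u * mixG m1 m2 p1 p2 w1 w2 (1 / u))
        (w1 * (m1 - mixX m1 m2 p1 p2 w1 w2 z) ^ 2 / 2
          + w2 * (m2 - mixX m1 m2 p1 p2 w1 w2 z) ^ 2 / 2) (1 / z) ∧
      0 ≤ w1 * (m1 - mixX m1 m2 p1 p2 w1 w2 z) ^ 2 / 2
          + w2 * (m2 - mixX m1 m2 p1 p2 w1 w2 z) ^ 2 / 2) ∧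
    AntitoneOn (fun z : ℝ => mixG m1 m2 p1 p2 w1 w2 z / z) (Set.Ioc 0 1) := by
  have hp2' : p2 = 1 - p1 := by linarith
  have hw2' : w2 = 1 - w1 := by linarith
  constructor
  · intro z hz
    obtain ⟨hz0, hz1⟩ := hz
    refine ⟨?_, by positivity⟩
    set d : ℝ := p1 - w1 with hd
    set D : ℝ := m1 - m2 with hD
    have hu0 : (0:ℝ) < 1 / z := by positivity
    have hu0ne : (1:ℝ) / z ≠ 0 := ne_of_gt hu0
    -- the smooth model function
    have h1 : HasDerivAt (fun u : ℝ => w1 * w2 * u) (w1 * w2) (1 / z) := by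
      simpa using (hasDerivAt_id (1 / z)).const_mul (w1 * w2)
    have h2 : HasDerivAt (fun u : ℝ => d ^ 2 * u⁻¹) (d ^ 2 * -(((1:ℝ)/z) ^ 2)⁻¹) (1 / z) :=
      (hasDerivAt_inv hu0ne).const_mul _
    have hg : HasDerivAt
        (fun u : ℝ => (w1 * w2 * u + d * (w2 - w1) - d ^ 2 * u⁻¹) * (D ^ 2 / 2))
        ((w1 * w2 - d ^ 2 * -(((1:ℝ)/z) ^ 2)⁻¹) * (D ^ 2 / 2)) (1 / z) :=
      ((h1.add_const _).sub h2).mul_const _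
    have heq : (fun u : ℝ => u * mixG m1 m2 p1 p2 w1 w2 (1 / u))
        =ᶠ[nhds (1 / z)] (fun u : ℝ => (w1 * w2 * u + d * (w2 - w1) - d ^ 2 * u⁻¹) * (D ^ 2 / 2)) := by
      filter_upwards [Ioi_mem_nhds hu0] with u hu
      have hune : u ≠ 0 := ne_of_gt hu
      rw [mixG_eq _ _ _ _ _ _ (1 / u) hps hws, hd, hD, hp2', hw2']
      field_simp
      ring
    have hfinal := hg.congr_of_eventuallyEq heq
    refine hfinal.congr_deriv ?_
    rw [mixX_eq _ _ _ _ _ _ z hps hws, hd, hD, hp2', hw2']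
    have hzsq : ((((1:ℝ)/z) ^ 2)⁻¹) = z ^ 2 := by
      rw [one_div, inv_pow, inv_inv]
    rw [hzsq]
    ring
  · intro z1 hz1 z2 hz2 h12
    simp only
    rw [mixG_eq _ _ _ _ _ _ z1 hps hws, mixG_eq _ _ _ _ _ _ z2 hps hws]
    rw [div_le_div_iff₀ hz2.1 hz1.1, hp2', hw2']
    have key : 0 ≤ (z2 - z1) * (w1 * (1 - w1) + (p1 - w1) ^ 2 * (z1 * z2)) * (m1 - m2) ^ 2 := by
      have h1 : (0:ℝ) ≤ z2 - z1 := by linarith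
      have h2 : (0:ℝ) ≤ w1 * (1 - w1) + (p1 - w1) ^ 2 * (z1 * z2) := by
        have hz12 : 0 < z1 * z2 := mul_pos hz1.1 hz2.1
        nlinarith [sq_nonneg (p1 - w1)]
      positivity
    nlinarith [key]
end

section
/- Consider the tracking rule: given a sequence of weight vectors w(t) ∈ Σ_K with w(K) = (1/K,…,1/K), initialize N_a(K) = 1 for all a, and at each time t+1 pull arm A_{t+1} ∈ argmax_a w_a(t+1)/N_a(t), incrementing N_{A_{t+1}}. If w(t) is a running average of vectors in Σ_K (so that t·w_a(t) − (t−1)·w_a(t−1) ∈ [0,1] for each a and t), then for all t ≥ K and all arms a: t·w_a(t) − K − 1 ≤ N_a(t) ≤ t·w_a(t) + 1. -/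
/-- Tracking-error guarantee: for the rule that pulls
`A_{t+1} ∈ argmax_a w_a(t+1)/N_a(t)` starting from one pull of each arm and
weights that are running averages of simplex vectors, for all `t ≥ K` and all
arms `a`, `t·w_a(t) − K − 1 ≤ N_a(t) ≤ t·w_a(t) + 1`. -/
theorem stmt_16 (K : ℕ) (hK : 1 ≤ K)
    (w : ℕ → Fin K → ℝ) (N : ℕ → Fin K → ℝ) (A : ℕ → Fin K)
    (hwsimplex : ∀ t, K ≤ t → (∀ a, 0 ≤ w t a) ∧ ∑ a, w t a = 1)
    (hwK : ∀ a, w K a = 1 / K)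
    (hNK : ∀ a, N K a = 1)
    (havg : ∀ t, K ≤ t → ∀ a,
      0 ≤ ((t : ℝ) + 1) * w (t + 1) a - (t : ℝ) * w t a ∧
      ((t : ℝ) + 1) * w (t + 1) a - (t : ℝ) * w t a ≤ 1)
    (hargmax : ∀ t, K ≤ t → ∀ b : Fin K,
      w (t + 1) b / N t b ≤ w (t + 1) (A (t + 1)) / N t (A (t + 1)))
    (hNrec : ∀ t, K ≤ t → ∀ a : Fin K,
      N (t + 1) a = N t a + if a = A (t + 1) then 1 else 0) :
    ∀ t, K ≤ t → ∀ a : Fin K,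
      (t : ℝ) * w t a - K - 1 ≤ N t a ∧ N t a ≤ (t : ℝ) * w t a + 1 := by
  have hKR : (0:ℝ) < K := by exact_mod_cast hK
  -- positivity of counts
  have hpos : ∀ t, K ≤ t → ∀ a, 1 ≤ N t a := by
    intro t ht
    induction t, ht using Nat.le_induction with
    | base => intro a; rw [hNK]
    | succ t ht ih =>
      intro a
      rw [hNrec t ht a]
      have := ih a
      split <;> linarith
  -- total count equals t
  have hsum : ∀ t, K ≤ t → ∑ a, N t a = (t : ℝ) := by
    intro t ht
    induction t, ht using Nat.le_induction with
    | base => simp [hNK]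
    | succ t ht ih =>
      have h1 : ∑ a, N (t+1) a = ∑ a, (N t a + if a = A (t+1) then (1:ℝ) else 0) :=
        Finset.sum_congr rfl fun a _ => hNrec t ht a
      rw [h1, Finset.sum_add_distrib, ih, Finset.sum_ite_eq' Finset.univ (A (t+1)) (fun _ => (1:ℝ))]
      simp
  -- upper bound
  have hub : ∀ t, K ≤ t → ∀ a, N t a ≤ (t:ℝ) * w t a + 1 := by
    intro t ht
    induction t, ht using Nat.le_induction with
    | base =>
      intro a
      rw [hNK, hwK, mul_one_div, div_self (ne_of_gt hKR)]
      linarith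
    | succ t ht ih =>
      have key : ∃ b, N t b < ((t:ℝ)+1) * w (t+1) b := by
        by_contra h
        push_neg at h
        have hsum1 : ∑ a, w (t+1) a = 1 := (hwsimplex (t+1) (by omega)).2
        have : ((t:ℝ)+1) ≤ (t:ℝ) := by
          calc ((t:ℝ)+1) = ∑ a, ((t:ℝ)+1) * w (t+1) a := by
                rw [← Finset.mul_sum, hsum1, mul_one]
            _ ≤ ∑ a, N t a := Finset.sum_le_sum fun a _ => h a
            _ = (t:ℝ) := hsum t ht
        linarith
      obtain ⟨b, hb⟩ := key
      have hNb := hpos t ht b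
      have hNA := hpos t ht (A (t+1))
      have h2 : 1/((t:ℝ)+1) < w (t+1) b / N t b := by
        rw [div_lt_div_iff₀ (by positivity) (by linarith)]
        nlinarith
      have h3 : 1/((t:ℝ)+1) < w (t+1) (A (t+1)) / N t (A (t+1)) :=
        lt_of_lt_of_le h2 (hargmax t ht b)
      rw [div_lt_div_iff₀ (by positivity) (by linarith)] at h3
      -- h3 : 1 * N t (A (t+1)) < w (t+1) (A (t+1)) * ((t:ℝ)+1)
      intro a
      rw [hNrec t ht a]
      by_cases hc : a = A (t+1)
      · rw [if_pos hc, hc]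
        push_cast
        nlinarith
      · rw [if_neg hc]
        have h4 := ih a
        have h5 := (havg t ht a).1
        push_cast
        linarith
  -- lower bound from upper bounds and total count
  intro t ht a
  refine ⟨?_, hub t ht a⟩
  have hs := hsum t ht
  have hw1 := (hwsimplex t ht).2
  have e1 : ∑ b ∈ Finset.univ.erase a, N t b + N t a = (t:ℝ) := by
    rw [Finset.sum_erase_add _ _ (Finset.mem_univ a), hs]
  have e2 : ∑ b ∈ Finset.univ.erase a, ((t:ℝ) * w t b) + (t:ℝ) * w t a = (t:ℝ) := by
    rw [Finset.sum_erase_add _ _ (Finset.mem_univ a), ← Finset.mul_sum, hw1, mul_one]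
  have e3 : ∑ b ∈ Finset.univ.erase a, (1:ℝ) = (K:ℝ) - 1 := by
    rw [Finset.sum_const, Finset.card_erase_of_mem (Finset.mem_univ a)]
    simp only [Finset.card_univ, Fintype.card_fin, nsmul_eq_mul, mul_one]
    push_cast [Nat.cast_sub hK]
    ring
  have e4 : ∑ b ∈ Finset.univ.erase a, N t b
      ≤ ∑ b ∈ Finset.univ.erase a, ((t:ℝ) * w t b + 1) :=
    Finset.sum_le_sum fun b _ => hub t ht b
  rw [Finset.sum_add_distrib, e3] at e4
  linarith
end
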